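/- arXiv:1809.08172 — 6 statements merged into one kernel-verified Lean document; each statement's English description precedes it below -/
import Mathlib

section
/- Fix integers n ≥ 1 and m ≥ 0. The map λ ↦ λ̄ is a bijection from the set of hook partitions (partitions λ with λ_{n+1} ≤ m) onto the set of weights μ ∈ ℤ_{≥0}^{n+m} satisfying condition (H1): μ_1 ≥ μ_2 ≥ … ≥ μ_n ≥ 0, μ_{n+1} ≥ μ_{n+2} ≥ … ≥ μ_{n+m} ≥ 0, and μ_n ≥ #{j : 1 ≤ j ≤ m, μ_{n+j} > 0}. -/
/-! Common definitions: the weight lattice `ℤ^{n+m}` is modeled as functions `ℕ → ℤ`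
(only the coordinates `1, …, n+m` are relevant), with standard basis vectors `eps i`.
Index `i` has parity 0 if `i ≤ n` and parity 1 otherwise. -/

namespace TwoBoundary

/-- The standard basis vector `ε_i` of the weight lattice. -/
def eps (i : ℕ) : ℕ → ℤ := fun k => if k = i then 1 else 0

/-- The sign of the positive root `ε_i − ε_j`: `+1` if it is even
(i.e. the parities of `i` and `j` agree), `−1` if it is odd. -/
def rootSign (n i j : ℕ) : ℤ := if (i ≤ n) = (j ≤ n) then 1 else -1

/-- `2ρ` = (sum of even positive roots) − (sum of odd positive roots). -/
def twoRho (n m : ℕ) : ℕ → ℤ :=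
  ∑ i ∈ Finset.Icc 1 (n + m), ∑ j ∈ Finset.Icc 1 (n + m),
    if i < j then rootSign n i j • (eps i - eps j) else 0

/-- The bilinear form with `⟨ε_i, ε_j⟩ = (−1)^{parity i} δ_{ij}`. -/
def form (n m : ℕ) (μ ν : ℕ → ℤ) : ℤ :=
  ∑ i ∈ Finset.Icc 1 (n + m), (if i ≤ n then (1 : ℤ) else -1) * (μ i * ν i)

/-- `φ_t = ε_1 + ⋯ + ε_t`. -/
def phi (t : ℕ) : ℕ → ℤ := fun k => if 1 ≤ k ∧ k ≤ t then 1 else 0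

/-- `ψ_s = ε_{n+1} + ⋯ + ε_{n+s}`. -/
def psi (n s : ℕ) : ℕ → ℤ := fun k => if n + 1 ≤ k ∧ k ≤ n + s then 1 else 0

/-- A partition, given by its sequence of parts `λ_1 ≥ λ_2 ≥ ⋯` (the index-0 value
is normalized to `0`): weakly decreasing with finitely many nonzero terms. -/
def IsPartition (lam : ℕ → ℕ) : Prop :=
  lam 0 = 0 ∧ (∀ i, 1 ≤ i → lam (i + 1) ≤ lam i) ∧ ∃ N, ∀ i, N ≤ i → lam i = 0

/-- A hook partition (relative to `(n, m)`): a partition with `λ_{n+1} ≤ m`. -/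
def IsHookPartition (n m : ℕ) (lam : ℕ → ℕ) : Prop :=
  IsPartition lam ∧ lam (n + 1) ≤ m

/-- The weight `λ̄` associated to a hook partition `λ`:
`λ̄_i = λ_i` for `1 ≤ i ≤ n`, and `λ̄_{n+j} = #{k > n : λ_k ≥ j}` for `1 ≤ j ≤ m`. -/
noncomputable def barWeight (n m : ℕ) (lam : ℕ → ℕ) : ℕ → ℤ := fun i =>
  if 1 ≤ i ∧ i ≤ n then (lam i : ℤ)
  else if n + 1 ≤ i ∧ i ≤ n + m then ({k : ℕ | n < k ∧ i - n ≤ lam k}.ncard : ℤ)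
  else 0

/-- The set `𝒫₀` of partitions occurring in the decomposition of
`L((a^p)) ⊗ L((b^q))` (for `q ≤ p`), by the combinatorial description of
Okada and Stanley. -/
def InP0 (a b p q : ℕ) (lam : ℕ → ℕ) : Prop :=
  IsPartition lam ∧
  (∀ i, p + q < i → lam i = 0) ∧
  (∀ i, 1 ≤ i → i ≤ q → lam i + lam (p + q + 1 - i) = a + b) ∧
  (∀ i, q + 1 ≤ i → i ≤ p → lam i = a) ∧
  (∀ i, 1 ≤ i → i ≤ q → max a b ≤ lam i)

/-- Condition (H1) on a weight `μ ∈ ℤ_{≥0}^{n+m}`: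
`μ_1 ≥ ⋯ ≥ μ_n ≥ 0`, `μ_{n+1} ≥ ⋯ ≥ μ_{n+m} ≥ 0`, and
`μ_n ≥ #{j : 1 ≤ j ≤ m, μ_{n+j} > 0}` (coordinates outside `1, …, n+m` vanish). -/
def SatisfiesH1 (n m : ℕ) (μ : ℕ → ℤ) : Prop :=
  μ 0 = 0 ∧ (∀ i, n + m < i → μ i = 0) ∧
  (∀ i, 1 ≤ i → i ≤ n + m → 0 ≤ μ i) ∧
  (∀ i, 1 ≤ i → i + 1 ≤ n → μ (i + 1) ≤ μ i) ∧
  (∀ i, n + 1 ≤ i → i + 1 ≤ n + m → μ (i + 1) ≤ μ i) ∧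
  ((((Finset.Icc 1 m).filter fun j => 0 < μ (n + j)).card : ℤ) ≤ μ n)

/-! Below row `n`, `λ̄` lists the conjugate of the tail partition `(λ_{n+1}, λ_{n+2}, …)`, which
fits into `m` columns exactly when `λ_{n+1} ≤ m`. Conjugation is an involution, so the inverse
keeps the first `n` coordinates and conjugates the last `m` back. The number of nonzero parts of a
conjugate is the largest part, so the last condition of (H1) is `λ_n ≥ λ_{n+1}`. -/

open Finset

-- For `f` antitone and vanishing beyond `M`, the parts of the conjugate partition.
def conjugate (f : ℕ → ℕ) (M j : ℕ) : ℕ := #{k ∈ Icc 1 M | j ≤ f k}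

lemma conjugate_antitone (f : ℕ → ℕ) (M : ℕ) : Antitone (conjugate f M) :=
  fun _ _ hjj' => card_le_card (monotone_filter_right _ fun _ _ h => hjj'.trans h)

lemma conjugate_congr {f g : ℕ → ℕ} {M : ℕ} (h : ∀ k ∈ Icc 1 M, f k = g k) :
    conjugate f M = conjugate g M :=
  funext fun j => congrArg card (filter_congr fun k hk => by rw [h k hk])

lemma conjugate_le (f : ℕ → ℕ) (M j : ℕ) : conjugate f M j ≤ M :=
  (card_filter_le _ _).trans (by simp)

lemma card_filter_Icc_of_iff_le {p : ℕ → Prop} [DecidablePred p] {a m : ℕ} (ha : a ≤ m)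
    (hp : ∀ j ∈ Icc 1 m, p j ↔ j ≤ a) : #{j ∈ Icc 1 m | p j} = a := by
  have : {j ∈ Icc 1 m | p j} = Icc 1 a := by
    rw [filter_congr hp]
    ext j
    simp only [mem_filter, mem_Icc]
    omega
  simp [this]

section Conjugate

variable {f : ℕ → ℕ} {M : ℕ}

lemma le_conjugate_iff (hf : AntitoneOn f (Set.Ici 1)) (hM : ∀ k, M < k → f k = 0)
    {i j : ℕ} (hi : 1 ≤ i) (hj : 1 ≤ j) : i ≤ conjugate f M j ↔ j ≤ f i := by
  constructor
  · intro hle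
    by_contra! hlt
    have hsub : {k ∈ Icc 1 M | j ≤ f k} ⊆ Icc 1 (i - 1) := by
      intro k hk
      simp only [mem_filter, mem_Icc] at hk ⊢
      have : ¬ i ≤ k := fun hik => by
        have := hf (Set.mem_Ici.2 hi) (Set.mem_Ici.2 hk.1.1) hik
        omega
      omega
    have := card_le_card hsub
    simp only [Nat.card_Icc] at this
    unfold conjugate at hle
    omega
  · intro hle
    have hiM : i ≤ M := by
      by_contra! hMi
      have := hM i hMi
      omega
    have hsub : Icc 1 i ⊆ {k ∈ Icc 1 M | j ≤ f k} := by
      intro k hk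
      simp only [mem_filter, mem_Icc] at hk ⊢
      exact ⟨⟨hk.1, hk.2.trans hiM⟩,
        hle.trans (hf (Set.mem_Ici.2 hk.1) (Set.mem_Ici.2 hi) hk.2)⟩
    simpa [conjugate] using card_le_card hsub

lemma conjugate_eq_zero_of_lt (hf : AntitoneOn f (Set.Ici 1)) (hM : ∀ k, M < k → f k = 0)
    {j : ℕ} (hj : f 1 < j) : conjugate f M j = 0 := by
  by_contra! h0
  have := (le_conjugate_iff hf hM le_rfl (by omega)).1 (Nat.one_le_iff_ne_zero.2 h0)
  omega

lemma card_filter_conjugate_pos (hf : AntitoneOn f (Set.Ici 1)) (hM : ∀ k, M < k → f k = 0)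
    {m : ℕ} (hm : f 1 ≤ m) : #{j ∈ Icc 1 m | 0 < conjugate f M j} = f 1 :=
  card_filter_Icc_of_iff_le hm fun _ hj =>
    le_conjugate_iff hf hM le_rfl (mem_Icc.1 hj).1

lemma conjugate_conjugate (hf : AntitoneOn f (Set.Ici 1)) (hM : ∀ k, M < k → f k = 0)
    {m k : ℕ} (hm : f 1 ≤ m) (hk : 1 ≤ k) : conjugate (conjugate f M) m k = f k :=
  card_filter_Icc_of_iff_le
    ((hf (Set.mem_Ici.2 le_rfl) (Set.mem_Ici.2 hk) hk).trans hm)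
    fun _ hj => le_conjugate_iff hf hM hk (mem_Icc.1 hj).1

end Conjugate

lemma barWeight_of_le {n m i : ℕ} (lam : ℕ → ℕ) (hi : 1 ≤ i) (hin : i ≤ n) :
    barWeight n m lam i = lam i := by
  simp [barWeight, hi, hin]

lemma barWeight_of_lt {n m i : ℕ} (lam : ℕ → ℕ) (hi : i = 0 ∨ n + m < i) :
    barWeight n m lam i = 0 := by
  unfold barWeight
  rw [if_neg (by omega), if_neg (by omega)]

lemma barWeight_add {n m N j : ℕ} {lam : ℕ → ℕ} (hN : ∀ k, N < k → lam (n + k) = 0)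
    (hj : 1 ≤ j) (hjm : j ≤ m) :
    barWeight n m lam (n + j) = conjugate (fun k => lam (n + k)) N j := by
  have hset : {k | n < k ∧ n + j - n ≤ lam k} =
      (n + ·) '' ↑({k ∈ Icc 1 N | j ≤ lam (n + k)}) := by
    ext k
    simp only [Set.mem_ofPred_eq, coe_filter, mem_Icc, Set.mem_image, Nat.add_sub_cancel_left]
    constructor
    · rintro ⟨hnk, hjk⟩
      refine ⟨k - n, ⟨⟨by omega, ?_⟩, by rwa [Nat.add_sub_cancel' hnk.le]⟩, by omega⟩
      by_contra! hNk
      have := hN (k - n) hNk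
      rw [Nat.add_sub_cancel' hnk.le] at this
      omega
    · rintro ⟨k, ⟨⟨hk, -⟩, hjk⟩, rfl⟩
      exact ⟨by omega, hjk⟩
  unfold barWeight
  rw [if_neg (by omega), if_pos (by omega), hset,
    Set.ncard_image_of_injective _ (add_right_injective n), Set.ncard_coe_finset]
  rfl

lemma IsHookPartition.exists_tail {n m : ℕ} {lam : ℕ → ℕ} (h : IsHookPartition n m lam) :
    ∃ N, AntitoneOn (fun k => lam (n + k)) (Set.Ici 1) ∧ (∀ k, N < k → lam (n + k) = 0) ∧
      lam (n + 1) ≤ m := by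
  obtain ⟨⟨-, hdec, N, hN⟩, hhook⟩ := h
  have hanti : AntitoneOn lam (Set.Ici 1) := antitoneOn_nat_Ici_of_succ_le hdec
  refine ⟨N, fun a ha b hb hab => hanti ?_ ?_ (by omega), fun k hk => hN _ (by omega), hhook⟩
  · simp only [Set.mem_Ici] at ha ⊢; omega
  · simp only [Set.mem_Ici] at hb ⊢; omega

lemma barWeight_mapsTo {n m : ℕ} (hn : 1 ≤ n) :
    Set.MapsTo (barWeight n m) {lam | IsHookPartition n m lam} {μ | SatisfiesH1 n m μ} := by
  intro lam hlam
  obtain ⟨N, hanti, hN, hm⟩ := hlam.exists_tail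
  have hdec := hlam.1.2.1
  refine ⟨barWeight_of_lt lam (.inl rfl), fun i hi => barWeight_of_lt lam (.inr hi),
    fun i _ _ => ?_, fun i hi hin => ?_, fun i hi him => ?_, ?_⟩
  · unfold barWeight
    split_ifs <;> positivity
  · rw [barWeight_of_le lam hi (by omega), barWeight_of_le lam (by omega) (by omega)]
    exact_mod_cast hdec i hi
  · obtain ⟨j, rfl⟩ : ∃ j, i = n + j := ⟨i - n, by omega⟩
    rw [add_assoc, barWeight_add hN (by omega) (by omega), barWeight_add hN (by omega) (by omega)]
    exact_mod_cast conjugate_antitone _ _ (Nat.le_succ j)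
  · have hcard : #{j ∈ Icc 1 m | 0 < barWeight n m lam (n + j)} = lam (n + 1) := by
      rw [← card_filter_conjugate_pos hanti hN hm]
      congr 1
      refine filter_congr fun j hj => ?_
      rw [barWeight_add hN (mem_Icc.1 hj).1 (mem_Icc.1 hj).2, Nat.cast_pos]
    rw [hcard, barWeight_of_le lam hn le_rfl]
    exact_mod_cast hdec n hn

def barWeightInv (n m : ℕ) (μ : ℕ → ℤ) : ℕ → ℕ := fun i =>
  if i = 0 then 0 else if i ≤ n then (μ i).toNat
  else conjugate (fun j => (μ (n + j)).toNat) m (i - n)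

lemma barWeightInv_of_le {n m i : ℕ} (μ : ℕ → ℤ) (hi : 1 ≤ i) (hin : i ≤ n) :
    barWeightInv n m μ i = (μ i).toNat := by
  unfold barWeightInv
  rw [if_neg (by omega), if_pos hin]

lemma barWeightInv_add {n m k : ℕ} (μ : ℕ → ℤ) (hk : 1 ≤ k) :
    barWeightInv n m μ (n + k) = conjugate (fun j => (μ (n + j)).toNat) m k := by
  unfold barWeightInv
  rw [if_neg (by omega), if_neg (by omega), Nat.add_sub_cancel_left]

lemma SatisfiesH1.tail {n m : ℕ} {μ : ℕ → ℤ} (h : SatisfiesH1 n m μ) :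
    AntitoneOn (fun j => (μ (n + j)).toNat) (Set.Ici 1) ∧
      ∀ j, m < j → (μ (n + j)).toNat = 0 := by
  obtain ⟨-, hzero, -, -, hdec, -⟩ := h
  refine ⟨antitoneOn_nat_Ici_of_succ_le fun j hj => ?_,
    fun j hj => by simp [hzero (n + j) (by omega)]⟩
  by_cases hjm : j + 1 ≤ m
  · exact Int.toNat_le_toNat (hdec (n + j) (by omega) (by omega))
  · simp [hzero (n + (j + 1)) (by omega)]

lemma barWeightInv_mapsTo {n m : ℕ} :
    Set.MapsTo (barWeightInv n m) {μ | SatisfiesH1 n m μ} {lam | IsHookPartition n m lam} := by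
  intro μ hμ
  obtain ⟨hanti, hm⟩ := hμ.tail
  obtain ⟨-, -, -, hdec, -, hcount⟩ := hμ
  have hvanish : ∀ i, n + (μ (n + 1)).toNat + 1 ≤ i → barWeightInv n m μ i = 0 := by
    intro i hi
    obtain ⟨k, rfl⟩ : ∃ k, i = n + k := ⟨i - n, by omega⟩
    rw [barWeightInv_add μ (by omega)]
    exact conjugate_eq_zero_of_lt hanti hm (by omega)
  refine ⟨⟨rfl, fun i hi => ?_, _, hvanish⟩, ?_⟩
  · rcases lt_trichotomy i n with hin | rfl | hin
    · rw [barWeightInv_of_le μ (by omega) hin, barWeightInv_of_le μ hi hin.le]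
      exact Int.toNat_le_toNat (hdec i hi hin)
    · rw [barWeightInv_add μ le_rfl, barWeightInv_of_le μ hi le_rfl]
      have : conjugate (fun j => (μ (i + j)).toNat) m 1 = #{j ∈ Icc 1 m | 0 < μ (i + j)} :=
        congrArg card (filter_congr fun j _ => by beta_reduce; omega)
      omega
    · obtain ⟨k, rfl⟩ : ∃ k, i = n + k := ⟨i - n, by omega⟩
      rw [add_assoc, barWeightInv_add μ (by omega), barWeightInv_add μ (by omega)]
      exact conjugate_antitone _ _ (Nat.le_succ k)
  · show barWeightInv n m μ (n + 1) ≤ m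
    rw [barWeightInv_add μ le_rfl]
    exact conjugate_le _ _ _

lemma barWeightInv_barWeight {n m : ℕ} {lam : ℕ → ℕ} (hlam : IsHookPartition n m lam) :
    barWeightInv n m (barWeight n m lam) = lam := by
  obtain ⟨N, hanti, hN, hm⟩ := hlam.exists_tail
  funext i
  rcases Nat.eq_zero_or_pos i with rfl | hi
  · exact hlam.1.1.symm
  by_cases hin : i ≤ n
  · rw [barWeightInv_of_le _ hi hin, barWeight_of_le lam hi hin, Int.toNat_natCast]
  obtain ⟨k, rfl⟩ : ∃ k, i = n + k := ⟨i - n, by omega⟩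
  rw [barWeightInv_add _ (by omega), ← conjugate_conjugate hanti hN hm (by omega)]
  refine congrFun (conjugate_congr fun j hj => ?_) k
  rw [barWeight_add hN (mem_Icc.1 hj).1 (mem_Icc.1 hj).2, Int.toNat_natCast]

lemma barWeight_barWeightInv {n m : ℕ} {μ : ℕ → ℤ} (hμ : SatisfiesH1 n m μ) :
    barWeight n m (barWeightInv n m μ) = μ := by
  obtain ⟨hanti, hm⟩ := hμ.tail
  obtain ⟨hzero, hzero', hnonneg, -, -, -⟩ := hμ
  have hvanish : ∀ k, (μ (n + 1)).toNat < k → barWeightInv n m μ (n + k) = 0 := fun k hk => by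
    rw [barWeightInv_add μ (by omega)]
    exact conjugate_eq_zero_of_lt hanti hm hk
  funext i
  rcases Nat.eq_zero_or_pos i with rfl | hi
  · rw [barWeight_of_lt _ (.inl rfl), hzero]
  by_cases hin : i ≤ n
  · rw [barWeight_of_le _ hi hin, barWeightInv_of_le μ hi hin,
      Int.toNat_of_nonneg (hnonneg i hi (by omega))]
  by_cases him : n + m < i
  · rw [barWeight_of_lt _ (.inr him), hzero' i him]
  obtain ⟨j, rfl⟩ : ∃ j, i = n + j := ⟨i - n, by omega⟩
  rw [barWeight_add hvanish (by omega) (by omega),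
    conjugate_congr (g := conjugate (fun j => (μ (n + j)).toNat) m)
      fun k hk => barWeightInv_add μ (mem_Icc.1 hk).1,
    conjugate_conjugate hanti hm le_rfl (by omega),
    Int.toNat_of_nonneg (hnonneg _ (by omega) (by omega))]

/-- for `n ≥ 1`, the map `λ ↦ λ̄` is a bijection from the set of hook
partitions onto the set of weights satisfying condition (H1). -/
theorem barWeight_bijOn (n m : ℕ) (hn : 1 ≤ n) :
    Set.BijOn (barWeight n m)
      {lam : ℕ → ℕ | IsHookPartition n m lam}
      {μ : ℕ → ℤ | SatisfiesH1 n m μ} :=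
  Set.InvOn.bijOn
    ⟨fun _ hlam => barWeightInv_barWeight hlam, fun _ hμ => barWeight_barWeightInv hμ⟩
    (barWeight_mapsTo hn) barWeightInv_mapsTo

end TwoBoundary
end

section
/- For every integer u and every integer s with 0 ≤ s ≤ m, one has ⟨uψ_s, uψ_s + 2ρ⟩ = u·s·(s − n − m − u). -/
/-! Common definitions: the weight lattice `ℤ^{n+m}` is modeled as functions `ℕ → ℤ`
(only the coordinates `1, …, n+m` are relevant), with standard basis vectors `eps i`.
Index `i` has parity 0 if `i ≤ n` and parity 1 otherwise. -/

namespace TwoBoundary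

private lemma range_sum_aux (n m : ℕ) (u : ℤ) (s : ℕ) :
    ∑ k ∈ Finset.range s, -(u * (u + (3 * (n:ℤ) + m + 1 - 2 * ((n + 1 + k : ℕ) : ℤ))))
      = u * s * ((s : ℤ) - n - m - u) := by
  induction s with
  | zero => simp
  | succ t ih =>
    rw [Finset.sum_range_succ, ih]
    push_cast
    ring

set_option maxHeartbeats 1000000 in
open Finset in
private lemma twoRho_apply_aux (n m k : ℕ) (h1 : n + 1 ≤ k) (h2 : k ≤ n + m) :
    twoRho n m k = 3 * (n : ℤ) + m + 1 - 2 * k := by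
  unfold twoRho
  rw [Finset.sum_apply]
  simp only [Finset.sum_apply, ite_apply, Pi.zero_apply, Pi.smul_apply, Pi.sub_apply,
    smul_eq_mul, eps]
  have step : ∀ i ∈ Icc 1 (n+m), ∀ j ∈ Icc 1 (n+m),
      (if i < j then rootSign n i j * ((if k = i then (1:ℤ) else 0) - (if k = j then 1 else 0)) else 0)
      = (if i = k then (if k < j then rootSign n k j else 0) else 0)
        - (if j = k then (if i < k then rootSign n i k else 0) else 0) := by
    intro i _ j _
    rcases eq_or_ne i k with hik | hik <;> rcases eq_or_ne j k with hjk | hjk <;>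
      subst_vars <;> split_ifs <;> first | omega | (exfalso; omega) | ring1
  rw [Finset.sum_congr rfl fun i hi => Finset.sum_congr rfl (step i hi)]
  have split1 : ∀ i ∈ Icc 1 (n+m),
      (∑ j ∈ Icc 1 (n+m), ((if i = k then (if k < j then rootSign n k j else 0) else 0)
        - (if j = k then (if i < k then rootSign n i k else 0) else 0)))
      = (if i = k then (∑ j ∈ Icc 1 (n+m), if k < j then rootSign n k j else 0) else 0)
        - (if i < k then rootSign n i k else 0) := by
    intro i _
    rw [Finset.sum_sub_distrib]
    congr 1
    · split_ifs <;> simp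
    · rw [Finset.sum_ite_eq' (Icc 1 (n+m)) k]
      rw [if_pos (by simp [mem_Icc]; omega)]
  rw [Finset.sum_congr rfl split1, Finset.sum_sub_distrib,
    Finset.sum_ite_eq' (Icc 1 (n+m)) k, if_pos (by simp [mem_Icc]; omega : k ∈ Icc 1 (n+m))]
  have e1 : (∑ j ∈ Icc 1 (n+m), if k < j then rootSign n k j else 0)
      = ((n + m - k : ℕ) : ℤ) := by
    have : ∀ j ∈ Icc 1 (n+m), (if k < j then rootSign n k j else 0)
        = if k < j then (1:ℤ) else 0 := by
      intro j hj
      split_ifs with h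
      · unfold rootSign
        rw [if_pos]
        simp only [eq_iff_iff]
        constructor <;> intro <;> omega
      · rfl
    rw [Finset.sum_congr rfl this, Finset.sum_boole]
    have : Finset.filter (fun j => k < j) (Icc 1 (n+m)) = Ioc k (n+m) := by
      ext x; simp only [mem_filter, mem_Icc, mem_Ioc]; omega
    rw [this, Nat.card_Ioc]
  have e2 : (∑ i ∈ Icc 1 (n+m), if i < k then rootSign n i k else 0)
      = ((k - 1 - n : ℕ) : ℤ) - n := by
    have : ∀ i ∈ Icc 1 (n+m), (if i < k then rootSign n i k else 0)
        = (if n + 1 ≤ i ∧ i < k then (1:ℤ) else 0) - (if i ≤ n then (1:ℤ) else 0) := by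
      intro i hi
      simp only [mem_Icc] at hi
      have hkn : ¬ k ≤ n := by omega
      have hsign : rootSign n i k = if i ≤ n then -1 else 1 := by
        by_cases hin : i ≤ n
        · have hne : ¬ ((i ≤ n) = (k ≤ n)) := by
            simp only [eq_iff_iff]
            exact fun h => absurd (h.mp hin) hkn
          unfold rootSign
          rw [if_neg hne, if_pos hin]
        · have heq : (i ≤ n) = (k ≤ n) := by
            simp only [eq_iff_iff]
            constructor <;> intro <;> omega
          unfold rootSign
          rw [if_pos heq, if_neg hin]
      rw [hsign]
      split_ifs <;> first | omega | (exfalso; omega) | ring1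
    rw [Finset.sum_congr rfl this, Finset.sum_sub_distrib, Finset.sum_boole, Finset.sum_boole]
    have f1 : Finset.filter (fun i => n + 1 ≤ i ∧ i < k) (Icc 1 (n+m)) = Ico (n+1) k := by
      ext x; simp only [mem_filter, mem_Icc, mem_Ico]; omega
    have f2 : Finset.filter (fun i => i ≤ n) (Icc 1 (n+m)) = Icc 1 n := by
      ext x; simp only [mem_filter, mem_Icc]; omega
    rw [f1, f2, Nat.card_Ico, Nat.card_Icc]
    push_cast
    omega
  rw [e1, e2]
  push_cast
  omega

/-- `⟨uψ_s, uψ_s + 2ρ⟩ = u·s·(s − n − m − u)` for all `u ∈ ℤ` and `0 ≤ s ≤ m`. -/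
theorem form_smul_psi (n m : ℕ) (u : ℤ) (s : ℕ) (hs : s ≤ m) :
    form n m (u • psi n s) (u • psi n s + twoRho n m)
      = u * s * ((s : ℤ) - n - m - u) := by
  unfold form
  simp only [Pi.add_apply, Pi.smul_apply, smul_eq_mul]
  rw [← Finset.sum_subset (Finset.Icc_subset_Icc (by omega) (by omega) :
      Finset.Icc (n+1) (n+s) ⊆ Finset.Icc 1 (n+m))]
  · have congr1 : ∀ k ∈ Finset.Icc (n+1) (n+s),
        (if k ≤ n then (1:ℤ) else -1) * (u * psi n s k * (u * psi n s k + twoRho n m k))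
        = -(u * (u + (3 * (n:ℤ) + m + 1 - 2 * k))) := by
      intro k hk
      simp only [Finset.mem_Icc] at hk
      rw [twoRho_apply_aux n m k hk.1 (by omega)]
      have hp : psi n s k = 1 := by unfold psi; rw [if_pos]; omega
      rw [hp, if_neg (by omega)]
      ring
    rw [Finset.sum_congr rfl congr1, ← Finset.Ico_add_one_right_eq_Icc, Finset.sum_Ico_eq_sum_range]
    have hrange : n + s + 1 - (n + 1) = s := by omega
    rw [hrange]
    exact range_sum_aux n m u s
  · intro k hk hk'
    have hp : psi n s k = 0 := by
      unfold psi
      rw [if_neg]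
      simp only [Finset.mem_Icc] at hk hk'
      omega
    rw [hp]
    ring


end TwoBoundary
end

section
/- Assume n ≥ 1. Let μ ∈ ℤ^{n+m}, let l, r be integers with 1 ≤ l ≤ m and μ_{n+l} = r − n − 1, and set λ = μ + ε_{n+l}. Then ⟨λ, λ + 2ρ⟩ − ⟨μ, μ + 2ρ⟩ − ⟨ε_1, ε_1 + 2ρ⟩ = 2(l − r). -/
/-! Common definitions: the weight lattice `ℤ^{n+m}` is modeled as functions `ℕ → ℤ`
(only the coordinates `1, …, n+m` are relevant), with standard basis vectors `eps i`.
Index `i` has parity 0 if `i ≤ n` and parity 1 otherwise. -/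

namespace TwoBoundary

/-! The form is bilinear, so adding `ε_k` to `μ` changes `⟨μ, μ + 2ρ⟩` only in coordinate `k`, by
`±(2 μ_k + 1 + (2ρ)_k)`; the case `μ = 0` gives `⟨ε_1, ε_1 + 2ρ⟩ = 1 + (2ρ)_1`. The coordinate
`(2ρ)_k = ∑_j rootSign(k, j) · sgn(j - k)` is a sum of signs that is constant on the four blocks into
which `k` and the parity boundary `n` cut `1, …, n + m`, whence `(2ρ)_1 = n - 1 - m` and
`(2ρ)_{n+l} = n + m + 1 - 2l`. -/

lemma sum_Ioc_eq_of_forall_eq {f : ℕ → ℤ} {a b : ℕ} {c : ℤ} (h : ∀ j ∈ Finset.Ioc a b, f j = c) :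
    ∑ j ∈ Finset.Ioc a b, f j = (b - a : ℕ) * c := by
  rw [Finset.sum_congr rfl h, Finset.sum_const, Nat.card_Ioc, nsmul_eq_mul]

lemma sum_Ioc_zero_eq_of_piecewise_const {f : ℕ → ℤ} {a b c d : ℕ} {x y z w : ℤ}
    (hab : a ≤ b) (hbc : b ≤ c) (hcd : c ≤ d)
    (hx : ∀ j ∈ Finset.Ioc 0 a, f j = x) (hy : ∀ j ∈ Finset.Ioc a b, f j = y)
    (hz : ∀ j ∈ Finset.Ioc b c, f j = z) (hw : ∀ j ∈ Finset.Ioc c d, f j = w) :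
    ∑ j ∈ Finset.Ioc 0 d, f j = a * x + (b - a : ℕ) * y + (c - b : ℕ) * z + (d - c : ℕ) * w := by
  rw [← Finset.sum_Ioc_consecutive f (by omega) hcd, ← Finset.sum_Ioc_consecutive f (by omega) hbc,
    ← Finset.sum_Ioc_consecutive f (Nat.zero_le a) hab, sum_Ioc_eq_of_forall_eq hx,
    sum_Ioc_eq_of_forall_eq hy, sum_Ioc_eq_of_forall_eq hz, sum_Ioc_eq_of_forall_eq hw, Nat.sub_zero]

lemma rootSign_of_iff {n i j : ℕ} (h : i ≤ n ↔ j ≤ n) : rootSign n i j = 1 :=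
  if_pos (propext h)

lemma rootSign_of_not_iff {n i j : ℕ} (h : ¬(i ≤ n ↔ j ≤ n)) : rootSign n i j = -1 :=
  if_neg fun h' => h (Iff.of_eq h')

lemma sign_sub_of_lt {j k : ℕ} (h : j < k) : Int.sign ((j : ℤ) - k) = -1 :=
  Int.sign_eq_neg_one_of_neg (by omega)

lemma sign_sub_of_gt {j k : ℕ} (h : k < j) : Int.sign ((j : ℤ) - k) = 1 :=
  Int.sign_eq_one_of_pos (by omega)

lemma rootSign_comm (n i j : ℕ) : rootSign n i j = rootSign n j i := by
  unfold rootSign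
  simp only [eq_comm]

lemma twoRho_apply {n m k : ℕ} (hk : k ∈ Finset.Icc 1 (n + m)) :
    twoRho n m k = ∑ j ∈ Finset.Icc 1 (n + m), rootSign n k j * Int.sign ((j : ℤ) - k) := by
  have hterm : ∀ i j : ℕ, (if i < j then rootSign n i j • (eps i - eps j) else 0) k
      = (if i = k then (if k < j then rootSign n k j else 0) else 0)
        - (if j = k then (if i < k then rootSign n i k else 0) else 0) := by
    intro i j
    rw [apply_ite (fun f : ℕ → ℤ => f k)]
    simp only [Pi.smul_apply, Pi.sub_apply, eps, Pi.zero_apply, smul_eq_mul]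
    split_ifs <;> subst_vars <;> omega
  simp only [twoRho, Finset.sum_apply, hterm, Finset.sum_sub_distrib, Finset.sum_ite_eq', hk, if_true]
  rw [Finset.sum_comm]
  simp only [Finset.sum_ite_eq', hk, if_true, ← Finset.sum_sub_distrib]
  refine Finset.sum_congr rfl fun j _ => ?_
  rw [rootSign_comm n j k]
  rcases lt_trichotomy j k with h | rfl | h
  · simp [h, h.not_gt, sign_sub_of_lt h]
  · simp
  · simp [h, h.not_gt, sign_sub_of_gt h]

lemma twoRho_apply_of_le {n m k : ℕ} (hk : 1 ≤ k) (hkn : k ≤ n) :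
    twoRho n m k = n + 1 - 2 * k - m := by
  rw [twoRho_apply (by simp; omega),
    show Finset.Icc 1 (n + m) = Finset.Ioc 0 (n + m) from Finset.Icc_add_one_left_eq_Ioc 0 _,
    sum_Ioc_zero_eq_of_piecewise_const (a := k - 1) (b := k) (c := n) (x := -1) (y := 0) (z := 1)
      (w := -1) (by omega) hkn (by omega)]
  · omega
  all_goals intro j hj; rw [Finset.mem_Ioc] at hj
  · rw [sign_sub_of_lt (by omega), rootSign_of_iff (by omega), mul_neg_one]
  · simp [show j = k by omega]
  · rw [sign_sub_of_gt (by omega), rootSign_of_iff (by omega), mul_one]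
  · rw [sign_sub_of_gt (by omega), rootSign_of_not_iff (by omega), mul_one]

lemma twoRho_apply_add {n m l : ℕ} (hl : 1 ≤ l) (hlm : l ≤ m) :
    twoRho n m (n + l) = n + m + 1 - 2 * l := by
  rw [twoRho_apply (by simp; omega),
    show Finset.Icc 1 (n + m) = Finset.Ioc 0 (n + m) from Finset.Icc_add_one_left_eq_Ioc 0 _,
    sum_Ioc_zero_eq_of_piecewise_const (a := n) (b := n + l - 1) (c := n + l) (x := 1) (y := -1)
      (z := 0) (w := 1) (by omega) (by omega) (by omega)]
  · omega
  all_goals intro j hj; rw [Finset.mem_Ioc] at hj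
  · rw [sign_sub_of_lt (by omega), rootSign_of_not_iff (by omega), neg_one_mul, neg_neg]
  · rw [sign_sub_of_lt (by omega), rootSign_of_iff (by omega), mul_neg_one]
  · simp [show j = n + l by omega]
  · rw [sign_sub_of_gt (by omega), rootSign_of_iff (by omega), mul_one]

lemma form_zero_left (n m : ℕ) (ν : ℕ → ℤ) : form n m 0 ν = 0 := by
  simp [form]

lemma form_add_eps_sub_form {n m k : ℕ} (hk : k ∈ Finset.Icc 1 (n + m)) (μ ν : ℕ → ℤ) :
    form n m (μ + eps k) (μ + eps k + ν) - form n m μ (μ + ν)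
      = (if k ≤ n then 1 else -1) * (2 * μ k + 1 + ν k) := by
  rw [form, form, ← Finset.sum_sub_distrib, Finset.sum_eq_single_of_mem k hk]
  · simp only [Pi.add_apply, eps, ↓reduceIte]
    ring
  · intro j _ hj
    simp only [Pi.add_apply, eps, if_neg hj]
    ring

/-- adding a box in an odd row: if `1 ≤ l ≤ m`, `μ_{n+l} = r − n − 1` and
`λ = μ + ε_{n+l}`, then `⟨λ, λ+2ρ⟩ − ⟨μ, μ+2ρ⟩ − ⟨ε_1, ε_1+2ρ⟩ = 2(l − r)`. -/
theorem form_diff_add_odd_box (n m : ℕ) (hn : 1 ≤ n) (μ : ℕ → ℤ) (l : ℕ) (r : ℤ)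
    (hl1 : 1 ≤ l) (hlm : l ≤ m) (hμ : μ (n + l) = r - (n : ℤ) - 1) :
    form n m (μ + eps (n + l)) (μ + eps (n + l) + twoRho n m)
      - form n m μ (μ + twoRho n m)
      - form n m (eps 1) (eps 1 + twoRho n m) = 2 * ((l : ℤ) - r) := by
  have hodd := form_add_eps_sub_form (show n + l ∈ Finset.Icc 1 (n + m) by simp; omega) μ (twoRho n m)
  have heven := form_add_eps_sub_form (show 1 ∈ Finset.Icc 1 (n + m) by simp; omega) 0 (twoRho n m)
  rw [if_neg (by omega), hμ, twoRho_apply_add hl1 hlm] at hodd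
  rw [if_pos hn, twoRho_apply_of_le le_rfl hn, form_zero_left, zero_add, Pi.zero_apply] at heven
  linear_combination hodd - heven

end TwoBoundary
end

section
/- Assume n ≥ 1. Let μ ⊆ λ be hook partitions whose Young diagrams differ by exactly one box b (i.e., the diagram of μ is contained in that of λ and |λ| = |μ| + 1). Then ⟨λ̄, λ̄ + 2ρ⟩ − ⟨μ̄, μ̄ + 2ρ⟩ = 2·c(b) + n − m, where c(b) is the content of the added box b. -/
/-! Common definitions: the weight lattice `ℤ^{n+m}` is modeled as functions `ℕ → ℤ`
(only the coordinates `1, …, n+m` are relevant), with standard basis vectors `eps i`.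
Index `i` has parity 0 if `i ≤ n` and parity 1 otherwise. -/

namespace TwoBoundary

private lemma twoRho_split (n m k : ℕ) (hk : k ∈ Finset.Icc 1 (n + m)) :
    twoRho n m k
      = (∑ j ∈ Finset.Icc 1 (n + m), (if k < j then rootSign n k j else 0))
        - ∑ i ∈ Finset.Icc 1 (n + m), (if i < k then rootSign n i k else 0) := by
  unfold twoRho
  rw [Finset.sum_apply]
  have step : ∀ i ∈ Finset.Icc 1 (n + m),
      (∑ j ∈ Finset.Icc 1 (n + m), if i < j then rootSign n i j • (eps i - eps j) else 0) k
      = (if i = k then (∑ j ∈ Finset.Icc 1 (n + m), if k < j then rootSign n k j else 0) else 0)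
        - (if i < k then rootSign n i k else 0) := by
    intro i hi
    rw [Finset.sum_apply]
    simp only [ite_apply, Pi.zero_apply, Pi.smul_apply, Pi.sub_apply, smul_eq_mul]
    have e1 : ∀ j ∈ Finset.Icc 1 (n + m),
        (if i < j then rootSign n i j * (eps i k - eps j k) else 0)
        = (if i < j then rootSign n i j * eps i k else 0)
          - (if j = k then (if i < k then rootSign n i k else 0) else 0) := by
      intro j _
      by_cases h2 : j = k
      · subst h2
        by_cases h1 : i < j
        · simp [eps, h1, show ¬ j = i by omega]
        · simp [eps, h1]
      · by_cases h1 : i < j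
        · simp [eps, h1, h2, show ¬ k = j from fun hh => h2 hh.symm]
        · simp [h1, h2]
    rw [Finset.sum_congr rfl e1, Finset.sum_sub_distrib, Finset.sum_ite_eq' _ k _, if_pos hk]
    congr 1
    by_cases h : i = k
    · subst h
      rw [if_pos rfl]
      simp [eps]
    · rw [if_neg h]
      refine Finset.sum_eq_zero fun j _ => ?_
      by_cases h1 : i < j <;>
        simp [h1, eps, show ¬ k = i from fun hh => h hh.symm]
  rw [Finset.sum_congr rfl step, Finset.sum_sub_distrib, Finset.sum_ite_eq' _ k _, if_pos hk]

private lemma icc_eq_ioc (N : ℕ) : Finset.Icc 1 N = Finset.Ioc 0 N := by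
  ext x; simp [Nat.lt_iff_add_one_le]

private lemma sum_gt (n m k : ℕ) (hk1 : 1 ≤ k) (hk2 : k ≤ n + m) :
    (∑ j ∈ Finset.Icc 1 (n + m), (if k < j then rootSign n k j else 0))
      = if k ≤ n then (n : ℤ) - k - m else (n : ℤ) + m - k := by
  rw [icc_eq_ioc]
  by_cases hkn : k ≤ n
  · rw [if_pos hkn]
    rw [← Finset.sum_Ioc_consecutive _ (Nat.zero_le k) hk2,
        ← Finset.sum_Ioc_consecutive _ hkn (Nat.le_add_right n m)]
    have h1 : (∑ j ∈ Finset.Ioc 0 k, (if k < j then rootSign n k j else 0)) = 0 :=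
      Finset.sum_eq_zero (fun j hj => by
        simp only [Finset.mem_Ioc] at hj; rw [if_neg (by omega)])
    have h2 : (∑ j ∈ Finset.Ioc k n, (if k < j then rootSign n k j else 0))
        = ((n - k : ℕ) : ℤ) := by
      have e : ∀ j ∈ Finset.Ioc k n, (if k < j then rootSign n k j else 0) = 1 := by
        intro j hj; simp only [Finset.mem_Ioc] at hj
        simp [rootSign, hj.1, hkn, hj.2]
      rw [Finset.sum_congr rfl e, Finset.sum_const, Nat.card_Ioc]
      simp
    have h3 : (∑ j ∈ Finset.Ioc n (n + m), (if k < j then rootSign n k j else 0))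
        = -(m : ℤ) := by
      have e : ∀ j ∈ Finset.Ioc n (n + m), (if k < j then rootSign n k j else 0) = -1 := by
        intro j hj; simp only [Finset.mem_Ioc] at hj
        simp [rootSign, show k < j by omega, hkn, show ¬ j ≤ n by omega]
      rw [Finset.sum_congr rfl e, Finset.sum_const, Nat.card_Ioc]
      simp
    rw [h1, h2, h3]
    omega
  · rw [if_neg hkn]
    rw [← Finset.sum_Ioc_consecutive _ (Nat.zero_le k) hk2]
    have h1 : (∑ j ∈ Finset.Ioc 0 k, (if k < j then rootSign n k j else 0)) = 0 :=
      Finset.sum_eq_zero (fun j hj => by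
        simp only [Finset.mem_Ioc] at hj; rw [if_neg (by omega)])
    have h2 : (∑ j ∈ Finset.Ioc k (n + m), (if k < j then rootSign n k j else 0))
        = ((n + m - k : ℕ) : ℤ) := by
      have e : ∀ j ∈ Finset.Ioc k (n + m), (if k < j then rootSign n k j else 0) = 1 := by
        intro j hj; simp only [Finset.mem_Ioc] at hj
        simp [rootSign, hj.1, hkn, show ¬ j ≤ n by omega]
      rw [Finset.sum_congr rfl e, Finset.sum_const, Nat.card_Ioc]
      simp
    rw [h1, h2]
    omega

private lemma sum_lt (n m k : ℕ) (hk1 : 1 ≤ k) (hk2 : k ≤ n + m) :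
    (∑ i ∈ Finset.Icc 1 (n + m), (if i < k then rootSign n i k else 0))
      = if k ≤ n then (k : ℤ) - 1 else (k : ℤ) - 1 - 2 * n := by
  rw [icc_eq_ioc]
  by_cases hkn : k ≤ n
  · rw [if_pos hkn]
    rw [← Finset.sum_Ioc_consecutive _ (Nat.zero_le (k - 1)) (show k - 1 ≤ n + m by omega)]
    have h1 : (∑ i ∈ Finset.Ioc 0 (k - 1), (if i < k then rootSign n i k else 0))
        = ((k - 1 : ℕ) : ℤ) := by
      have e : ∀ i ∈ Finset.Ioc 0 (k - 1), (if i < k then rootSign n i k else 0) = 1 := by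
        intro i hi; simp only [Finset.mem_Ioc] at hi
        simp [rootSign, show i < k by omega, show i ≤ n by omega, hkn]
      rw [Finset.sum_congr rfl e, Finset.sum_const, Nat.card_Ioc]
      simp
    have h2 : (∑ i ∈ Finset.Ioc (k - 1) (n + m), (if i < k then rootSign n i k else 0)) = 0 :=
      Finset.sum_eq_zero (fun i hi => by
        simp only [Finset.mem_Ioc] at hi; rw [if_neg (by omega)])
    rw [h1, h2]; omega
  · rw [if_neg hkn]
    rw [← Finset.sum_Ioc_consecutive _ (Nat.zero_le n) (show n ≤ n + m by omega),
        ← Finset.sum_Ioc_consecutive _ (show n ≤ k - 1 by omega) (show k - 1 ≤ n + m by omega)]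
    have h1 : (∑ i ∈ Finset.Ioc 0 n, (if i < k then rootSign n i k else 0)) = -(n : ℤ) := by
      have e : ∀ i ∈ Finset.Ioc 0 n, (if i < k then rootSign n i k else 0) = -1 := by
        intro i hi; simp only [Finset.mem_Ioc] at hi
        simp [rootSign, show i < k by omega, hi.2, hkn]
      rw [Finset.sum_congr rfl e, Finset.sum_const, Nat.card_Ioc]
      simp
    have h2 : (∑ i ∈ Finset.Ioc n (k - 1), (if i < k then rootSign n i k else 0))
        = ((k - 1 - n : ℕ) : ℤ) := by
      have e : ∀ i ∈ Finset.Ioc n (k - 1), (if i < k then rootSign n i k else 0) = 1 := by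
        intro i hi; simp only [Finset.mem_Ioc] at hi
        simp [rootSign, show i < k by omega, show ¬ i ≤ n by omega, hkn]
      rw [Finset.sum_congr rfl e, Finset.sum_const, Nat.card_Ioc]
      simp
    have h3 : (∑ i ∈ Finset.Ioc (k - 1) (n + m), (if i < k then rootSign n i k else 0)) = 0 :=
      Finset.sum_eq_zero (fun i hi => by
        simp only [Finset.mem_Ioc] at hi; rw [if_neg (by omega)])
    rw [h1, h2, h3]; omega

private lemma twoRho_apply_s6 (n m k : ℕ) (hk1 : 1 ≤ k) (hk2 : k ≤ n + m) :
    twoRho n m k = if k ≤ n then (n : ℤ) - m + 1 - 2 * k else 3 * (n : ℤ) + m + 1 - 2 * k := by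
  rw [twoRho_split n m k (by simp [Finset.mem_Icc]; omega),
      sum_gt n m k hk1 hk2, sum_lt n m k hk1 hk2]
  by_cases hkn : k ≤ n <;> simp [hkn] <;> ring

private lemma form_diff (n m : ℕ) (x y w : ℕ → ℤ) (t : ℕ) (ht : t ∈ Finset.Icc 1 (n + m))
    (h : ∀ i ∈ Finset.Icc 1 (n + m), i ≠ t → x i = y i) :
    form n m x (x + w) - form n m y (y + w)
      = (if t ≤ n then (1 : ℤ) else -1) * (x t * (x t + w t) - y t * (y t + w t)) := by
  unfold form
  rw [← Finset.sum_sub_distrib, Finset.sum_eq_single_of_mem t ht]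
  · simp only [Pi.add_apply]; ring
  · intro i hi hne
    simp only [Pi.add_apply, h i hi hne]
    ring

private lemma part_mono {lam : ℕ → ℕ} (h : ∀ i, 1 ≤ i → lam (i + 1) ≤ lam i)
    {i j : ℕ} (hi : 1 ≤ i) (hij : i ≤ j) : lam j ≤ lam i := by
  obtain ⟨d, rfl⟩ : ∃ d, j = i + d := ⟨j - i, by omega⟩
  clear hij
  induction d with
  | zero => exact le_rfl
  | succ d ih => exact le_trans (h (i + d) (by omega)) ih


/-- if the hook partitions `μ ⊆ λ` differ by exactly one box `b`
(in row `r`, so `b = (r, λ_r)` with content `λ_r − r`), then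
`⟨λ̄, λ̄+2ρ⟩ − ⟨μ̄, μ̄+2ρ⟩ = 2·c(b) + n − m`. -/
theorem form_barWeight_diff_one_box (n m : ℕ) (hn : 1 ≤ n) (lam mu : ℕ → ℕ)
    (hlam : IsHookPartition n m lam) (hmu : IsHookPartition n m mu)
    (r : ℕ) (hr : 1 ≤ r) (hbox : lam r = mu r + 1)
    (hother : ∀ i, 1 ≤ i → i ≠ r → lam i = mu i) :
    form n m (barWeight n m lam) (barWeight n m lam + twoRho n m)
      - form n m (barWeight n m mu) (barWeight n m mu + twoRho n m)
      = 2 * ((lam r : ℤ) - r) + n - m := by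
  obtain ⟨⟨hl0, hlm, hlfin⟩, hlhook⟩ := hlam
  obtain ⟨⟨hm0, hmm, hmfin⟩, hmhook⟩ := hmu
  by_cases hrn : r ≤ n
  · -- box in row r ≤ n
    have ht : r ∈ Finset.Icc 1 (n + m) := by simp [Finset.mem_Icc]; omega
    have hx : ∀ i ∈ Finset.Icc 1 (n + m), i ≠ r →
        barWeight n m lam i = barWeight n m mu i := by
      intro i hi hne
      simp only [Finset.mem_Icc] at hi
      unfold barWeight
      by_cases h1 : 1 ≤ i ∧ i ≤ n
      · rw [if_pos h1, if_pos h1, hother i h1.1 hne]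
      · rw [if_neg h1, if_neg h1]
        have hset : {k : ℕ | n < k ∧ i - n ≤ lam k} = {k : ℕ | n < k ∧ i - n ≤ mu k} := by
          ext k
          simp only [Set.mem_setOf_eq]
          constructor
          · rintro ⟨hk1, hk2⟩
            exact ⟨hk1, by rwa [← hother k (by omega) (by omega)]⟩
          · rintro ⟨hk1, hk2⟩
            exact ⟨hk1, by rwa [hother k (by omega) (by omega)]⟩
        rw [hset]
    rw [form_diff n m _ _ _ r ht hx, twoRho_apply_s6 n m r (by omega) (by omega),
        if_pos hrn, if_pos hrn]
    have h1 : barWeight n m lam r = (lam r : ℤ) := if_pos ⟨hr, hrn⟩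
    have h2 : barWeight n m mu r = (mu r : ℤ) := if_pos ⟨hr, hrn⟩
    rw [h1, h2, hbox]
    push_cast
    ring
  · -- box in row r > n, column c = lam r
    have hc1 : 1 ≤ lam r := by omega
    have hcm : lam r ≤ m := le_trans (part_mono hlm (by omega) (by omega)) hlhook
    set c := lam r with hc
    have ht : n + c ∈ Finset.Icc 1 (n + m) := by simp [Finset.mem_Icc]; omega
    have hx : ∀ i ∈ Finset.Icc 1 (n + m), i ≠ n + c →
        barWeight n m lam i = barWeight n m mu i := by
      intro i hi hne
      simp only [Finset.mem_Icc] at hi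
      unfold barWeight
      by_cases h1 : 1 ≤ i ∧ i ≤ n
      · rw [if_pos h1, if_pos h1, hother i h1.1 (by omega)]
      · rw [if_neg h1, if_neg h1]
        have hset : {k : ℕ | n < k ∧ i - n ≤ lam k} = {k : ℕ | n < k ∧ i - n ≤ mu k} := by
          ext k
          simp only [Set.mem_setOf_eq]
          by_cases hkr : k = r
          · subst hkr
            have : i - n ≠ c := by omega
            constructor
            · rintro ⟨ha, hb⟩; exact ⟨ha, by omega⟩
            · rintro ⟨ha, hb⟩; exact ⟨ha, by omega⟩
          · constructor
            · rintro ⟨ha, hb⟩; exact ⟨ha, by rwa [← hother k (by omega) hkr]⟩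
            · rintro ⟨ha, hb⟩; exact ⟨ha, by rwa [hother k (by omega) hkr]⟩
        rw [hset]
    have hbl : barWeight n m lam (n + c) = ((r - n : ℕ) : ℤ) := by
      unfold barWeight
      rw [if_neg (by omega), if_pos (by omega)]
      have hset : {k : ℕ | n < k ∧ (n + c) - n ≤ lam k} = ↑(Finset.Icc (n + 1) r) := by
        ext k
        simp only [Set.mem_setOf_eq, Finset.coe_Icc, Set.mem_Icc,
          Nat.add_sub_cancel_left]
        constructor
        · rintro ⟨ha, hb⟩
          refine ⟨by omega, ?_⟩
          by_contra hkr
          have h3 : mu k ≤ mu r := part_mono hmm hr (by omega)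
          have h4 : lam k = mu k := hother k (by omega) (by omega)
          omega
        · rintro ⟨ha, hb⟩
          exact ⟨by omega, part_mono hlm (by omega) hb⟩
      rw [hset, Set.ncard_coe_finset, Nat.card_Icc]
      congr 1
      omega
    have hbm : barWeight n m mu (n + c) = ((r - n - 1 : ℕ) : ℤ) := by
      unfold barWeight
      rw [if_neg (by omega), if_pos (by omega)]
      have hset : {k : ℕ | n < k ∧ (n + c) - n ≤ mu k} = ↑(Finset.Icc (n + 1) (r - 1)) := by
        ext k
        simp only [Set.mem_setOf_eq, Finset.coe_Icc, Set.mem_Icc,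
          Nat.add_sub_cancel_left]
        constructor
        · rintro ⟨ha, hb⟩
          refine ⟨by omega, ?_⟩
          by_contra hkr
          have h3 : mu k ≤ mu r := part_mono hmm hr (by omega)
          omega
        · rintro ⟨ha, hb⟩
          have h4 : lam k = mu k := hother k (by omega) (by omega)
          have h5 : lam r ≤ lam k := part_mono hlm (by omega) (by omega)
          omega
      rw [hset, Set.ncard_coe_finset, Nat.card_Icc]
      congr 1
      omega
    rw [form_diff n m _ _ _ (n + c) ht hx, twoRho_apply_s6 n m (n + c) (by omega) (by omega),
        if_neg (by omega), if_neg (by omega), hbl, hbm]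
    have e1 : ((r - n : ℕ) : ℤ) = (r : ℤ) - n := by omega
    have e2 : ((r - n - 1 : ℕ) : ℤ) = (r : ℤ) - n - 1 := by omega
    rw [e1, e2]
    push_cast
    ring

end TwoBoundary
end

section
/- Let λ ≠ μ be partitions in 𝒫₀ that differ by a box, i.e., there exist indices i ≠ j with λ_k = μ_k for all k ∉ {i, j}, λ_i = μ_i + 1, and μ_j = λ_j + 1. Then (λ_i − i) + (μ_j − j) = a − p + b − q; equivalently, the content of the box of λ not in μ∩λ plus the content of the box of μ not in μ∩λ equals a − p + b − q. -/
/-! Common definitions: the weight lattice `ℤ^{n+m}` is modeled as functions `ℕ → ℤ`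
(only the coordinates `1, …, n+m` are relevant), with standard basis vectors `eps i`.
Index `i` has parity 0 if `i ≤ n` and parity 1 otherwise. -/

namespace TwoBoundary

/-- if `λ ≠ μ` are partitions in `𝒫₀` differing by a box, then the
contents of the two distinct boxes sum to `a − p + b − q`:
`(λ_i − i) + (μ_j − j) = a − p + b − q`. -/
theorem P0_content_sum (a b p q : ℕ)
    (ha : 1 ≤ a) (hb : 1 ≤ b) (hp : 1 ≤ p) (hq : 1 ≤ q) (hqp : q ≤ p)
    (lam mu : ℕ → ℕ) (hlam : InP0 a b p q lam) (hmu : InP0 a b p q mu)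
    (hne : lam ≠ mu)
    (i j : ℕ) (hi : 1 ≤ i) (hj : 1 ≤ j) (hij : i ≠ j)
    (hli : lam i = mu i + 1) (hmj : mu j = lam j + 1)
    (hother : ∀ k, 1 ≤ k → k ≠ i → k ≠ j → lam k = mu k) :
    ((lam i : ℤ) - i) + ((mu j : ℤ) - j) = (a : ℤ) - p + b - q := by
  obtain ⟨hl1, hl2, hl3, hl4, hl5⟩ := hlam
  obtain ⟨hm1, hm2, hm3, hm4, hm5⟩ := hmu
  have hipq : i ≤ p + q := by
    by_contra h
    have := hl2 i (by omega)
    omega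
  have hinotmid : ¬ (q + 1 ≤ i ∧ i ≤ p) := by
    rintro ⟨h1, h2⟩
    have ha' := hl4 i h1 h2
    have hb' := hm4 i h1 h2
    omega
  rcases le_or_gt i q with hiq | hiq
  · have h1 := hl3 i hi hiq
    have h2 := hm3 i hi hiq
    have hij' : p + q + 1 - i = j := by
      by_contra h
      have hne' : p + q + 1 - i ≠ i := by omega
      have := hother (p + q + 1 - i) (by omega) hne' h
      omega
    subst hij'
    push_cast
    omega
  · have hip1 : p + 1 ≤ i := by
      by_contra h
      exact hinotmid ⟨by omega, by omega⟩
    have heq : p + q + 1 - (p + q + 1 - i) = i := by omega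
    have h1 := hl3 (p + q + 1 - i) (by omega) (by omega)
    have h2 := hm3 (p + q + 1 - i) (by omega) (by omega)
    rw [heq] at h1 h2
    have hkj : p + q + 1 - i = j := by
      by_contra h
      have := hother (p + q + 1 - i) (by omega) (by omega) h
      omega
    subst hkj
    push_cast
    omega

end TwoBoundary
end

section
/- Let λ ∈ 𝒫₀. Let 𝔅 be the set of boxes (r, c) of λ with r ≥ p + 1 (the boxes in rows p+1 and below) and let 𝔆 be the set of boxes (r, c) of λ with c ≥ a + 1 (the boxes in columns a+1 and beyond). Then Σ_{(r,c) ∈ 𝔆} (2(c − r) − (a − p + b − q)) = Σ_{(r,c) ∈ 𝔅} (2(c − r) − (a − p + b − q)) + q·b·(a + p). -/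
/-! Common definitions: the weight lattice `ℤ^{n+m}` is modeled as functions `ℕ → ℤ`
(only the coordinates `1, …, n+m` are relevant), with standard basis vectors `eps i`.
Index `i` has parity 0 if `i ≤ n` and parity 1 otherwise. -/

namespace TwoBoundary

/-- for `λ ∈ 𝒫₀`, with `𝔅` the boxes of `λ` in rows `≥ p+1` and `𝔆` the
boxes in columns `≥ a+1`,
`Σ_{(r,c) ∈ 𝔆} (2(c−r) − (a−p+b−q)) = Σ_{(r,c) ∈ 𝔅} (2(c−r) − (a−p+b−q)) + q·b·(a+p)`. -/
theorem P0_box_sum_transfer (a b p q : ℕ)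
    (ha : 1 ≤ a) (hb : 1 ≤ b) (hp : 1 ≤ p) (hq : 1 ≤ q) (hqp : q ≤ p)
    (lam : ℕ → ℕ) (hlam : InP0 a b p q lam) :
    (∑ᶠ rc ∈ {rc : ℕ × ℕ | 1 ≤ rc.1 ∧ 1 ≤ rc.2 ∧ rc.2 ≤ lam rc.1 ∧ a + 1 ≤ rc.2},
        (2 * ((rc.2 : ℤ) - rc.1) - ((a : ℤ) - p + b - q)))
      = (∑ᶠ rc ∈ {rc : ℕ × ℕ | 1 ≤ rc.1 ∧ 1 ≤ rc.2 ∧ rc.2 ≤ lam rc.1 ∧ p + 1 ≤ rc.1},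
          (2 * ((rc.2 : ℤ) - rc.1) - ((a : ℤ) - p + b - q)))
        + (q : ℤ) * b * (a + p) := by
  classical
  obtain ⟨⟨h00, hmono, -⟩, h0, hsum, hmid, hmax⟩ := hlam
  have mono : ∀ j i, 1 ≤ i → i ≤ j → lam j ≤ lam i := by
    intro j
    induction j with
    | zero => intro i h1 h2; omega
    | succ j ih =>
      intro i h1 h2
      rcases Nat.lt_or_ge i (j + 1) with h | h
      · exact le_trans (hmono j (by omega)) (ih i h1 (by omega))
      · have : i = j + 1 := by omega
        subst this; exact le_rfl
  have hA : ∀ r, 1 ≤ r → lam r ≤ a + b := by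
    intro r hr
    have h1 := hsum 1 le_rfl hq
    rcases Nat.lt_or_ge r 1 with h | h
    · omega
    · have := mono r 1 le_rfl h
      omega
  -- lam for rows p+1 .. p+q
  have hhigh : ∀ r, p + 1 ≤ r → r ≤ p + q → lam (p + q + 1 - r) + lam r = a + b ∧
      b ≤ lam (p + q + 1 - r) ∧ a ≤ lam (p + q + 1 - r) := by
    intro r h1 h2
    have hi1 : 1 ≤ p + q + 1 - r := by omega
    have hi2 : p + q + 1 - r ≤ q := by omega
    have e : p + q + 1 - (p + q + 1 - r) = r := by omega
    have hs := hsum (p + q + 1 - r) hi1 hi2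
    rw [e] at hs
    have hm := hmax (p + q + 1 - r) hi1 hi2
    exact ⟨hs, le_trans (le_max_right a b) hm, le_trans (le_max_left a b) hm⟩
  have hB : ∀ r, q < r → lam r ≤ a := by
    intro r hr
    rcases le_or_gt r p with h | h
    · have := hmid r (by omega) h; omega
    · rcases le_or_gt r (p + q) with h2 | h2
      · have := hhigh r (by omega) h2; omega
      · have := h0 r h2; omega
  have hC : ∀ r, p < r → lam r ≤ b := by
    intro r hr
    rcases le_or_gt r (p + q) with h2 | h2
    · have := hhigh r (by omega) h2; omega
    · have := h0 r h2; omega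
  set K : ℤ := (a : ℤ) - p + b - q with hK
  set f : ℕ × ℕ → ℤ := fun rc => 2 * ((rc.2 : ℤ) - rc.1) - K with hf
  set R : Finset (ℕ × ℕ) := Finset.Ioc 0 q ×ˢ Finset.Ioc a (a + b) with hR
  set R' : Finset (ℕ × ℕ) := Finset.Ioc p (p + q) ×ˢ Finset.Ioc 0 b with hR'
  have hSeq : {rc : ℕ × ℕ | 1 ≤ rc.1 ∧ 1 ≤ rc.2 ∧ rc.2 ≤ lam rc.1 ∧ a + 1 ≤ rc.2}
      = ↑(R.filter (fun rc => rc.2 ≤ lam rc.1)) := by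
    ext ⟨r, c⟩
    simp only [Set.mem_setOf_eq, Finset.coe_filter, Finset.mem_product, Finset.mem_Ioc, hR]
    constructor
    · rintro ⟨h1, h2, h3, h4⟩
      have hrq : r ≤ q := by
        by_contra hh
        have := hB r (by omega); omega
      have := hA r h1
      refine ⟨⟨⟨by omega, hrq⟩, by omega, by omega⟩, h3⟩
    · rintro ⟨⟨⟨hr1, hrq⟩, hc1, hc2⟩, hcl⟩
      exact ⟨by omega, by omega, hcl, by omega⟩
  have hBeq : {rc : ℕ × ℕ | 1 ≤ rc.1 ∧ 1 ≤ rc.2 ∧ rc.2 ≤ lam rc.1 ∧ p + 1 ≤ rc.1}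
      = ↑(R'.filter (fun rc => rc.2 ≤ lam rc.1)) := by
    ext ⟨r, c⟩
    simp only [Set.mem_setOf_eq, Finset.coe_filter, Finset.mem_product, Finset.mem_Ioc, hR']
    constructor
    · rintro ⟨h1, h2, h3, h4⟩
      have hrq : r ≤ p + q := by
        by_contra hh
        have := h0 r (by omega); omega
      have := hC r (by omega)
      refine ⟨⟨⟨by omega, hrq⟩, by omega, by omega⟩, h3⟩
    · rintro ⟨⟨⟨hr1, hrq⟩, hc1, hc2⟩, hcl⟩
      exact ⟨by omega, by omega, hcl, by omega⟩
  rw [show (fun rc : ℕ × ℕ => 2 * ((rc.2 : ℤ) - rc.1) - ((a : ℤ) - p + b - q)) = f from rfl] at *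
  rw [hSeq, hBeq, finsum_mem_coe_finset, finsum_mem_coe_finset]
  -- bijection: B-sum equals minus the sum over complement in R
  have hbij : ∑ rc ∈ R'.filter (fun rc => rc.2 ≤ lam rc.1), f rc
      = ∑ rc ∈ R.filter (fun rc => ¬ rc.2 ≤ lam rc.1), (- f rc) := by
    refine Finset.sum_nbij' (i := fun rc => (p + q + 1 - rc.1, a + b + 1 - rc.2))
      (j := fun rc => (p + q + 1 - rc.1, a + b + 1 - rc.2)) ?_ ?_ ?_ ?_ ?_
    · rintro ⟨r, c⟩ hm
      simp only [Finset.mem_filter, Finset.mem_product, Finset.mem_Ioc, hR, hR'] at hm ⊢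
      obtain ⟨⟨⟨hr1, hr2⟩, hc1, hc2⟩, hcl⟩ := hm
      obtain ⟨hs, hbl, hal⟩ := hhigh r (by omega) hr2
      refine ⟨⟨⟨by omega, by omega⟩, by omega, by omega⟩, by omega⟩
    · rintro ⟨r, c⟩ hm
      simp only [Finset.mem_filter, Finset.mem_product, Finset.mem_Ioc, hR, hR'] at hm ⊢
      obtain ⟨⟨⟨hr1, hr2⟩, hc1, hc2⟩, hcl⟩ := hm
      have hi1 : 1 ≤ r := by omega
      have hi2 : r ≤ q := by omega
      have hs := hsum r hi1 hi2
      refine ⟨⟨⟨by omega, by omega⟩, by omega, by omega⟩, by omega⟩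
    · rintro ⟨r, c⟩ hm
      simp only [Finset.mem_filter, Finset.mem_product, Finset.mem_Ioc, hR'] at hm
      obtain ⟨⟨⟨hr1, hr2⟩, hc1, hc2⟩, -⟩ := hm
      have := hA (p + q + 1 - r) (by omega)
      simp only [Prod.mk.injEq]
      omega
    · rintro ⟨r, c⟩ hm
      simp only [Finset.mem_filter, Finset.mem_product, Finset.mem_Ioc, hR] at hm
      obtain ⟨⟨⟨hr1, hr2⟩, hc1, hc2⟩, -⟩ := hm
      simp only [Prod.mk.injEq]
      omega
    · rintro ⟨r, c⟩ hm
      simp only [Finset.mem_filter, Finset.mem_product, Finset.mem_Ioc, hR'] at hm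
      obtain ⟨⟨⟨hr1, hr2⟩, hc1, hc2⟩, -⟩ := hm
      have e1 : ((p + q + 1 - r : ℕ) : ℤ) = (p : ℤ) + q + 1 - r := by omega
      have e2 : ((a + b + 1 - c : ℕ) : ℤ) = (a : ℤ) + b + 1 - c := by omega
      show 2 * ((c : ℤ) - r) - K
          = -(2 * (((a + b + 1 - c : ℕ) : ℤ) - ((p + q + 1 - r : ℕ) : ℤ)) - K)
      rw [e1, e2, hK]
      ring
  rw [hbij]
  have hsplit := Finset.sum_filter_add_sum_filter_not R (fun rc => rc.2 ≤ lam rc.1) f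
  -- total sum over rectangle R
  have gauss : ∀ n : ℕ, (∑ c ∈ Finset.Ioc 0 n, (c : ℤ)) * 2 = n * (n + 1) := by
    intro n
    induction n with
    | zero => simp
    | succ n ih =>
      rw [← Finset.sum_Ioc_consecutive _ (Nat.zero_le n) (Nat.le_succ n),
        Nat.Ioc_succ_singleton, Finset.sum_singleton]
      push_cast
      linear_combination ih
  have gauss2 : (∑ c ∈ Finset.Ioc a (a + b), (c : ℤ)) * 2 = b * (2 * a + b + 1) := by
    have hcons := Finset.sum_Ioc_consecutive (fun c : ℕ => (c : ℤ)) (Nat.zero_le a)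
      (Nat.le_add_right a b)
    have g1 := gauss a
    have g2 := gauss (a + b)
    push_cast at g1 g2 hcons ⊢
    nlinarith [g1, g2, hcons]
  have hinner : ∀ r : ℕ, ∑ c ∈ Finset.Ioc a (a + b), f (r, c)
      = (b : ℤ) * (2 * a + b + 1) - (b : ℤ) * (2 * r + K) := by
    intro r
    have : ∀ c : ℕ, f (r, c) = 2 * (c : ℤ) - (2 * (r : ℤ) + K) := by
      intro c
      show 2 * ((c : ℤ) - r) - K = 2 * (c : ℤ) - (2 * (r : ℤ) + K)
      ring
    simp_rw [this]
    rw [Finset.sum_sub_distrib, Finset.sum_const, ← Finset.mul_sum, Nat.card_Ioc]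
    simp only [Nat.add_sub_cancel_left, nsmul_eq_mul]
    linear_combination gauss2
  have hRsum : ∑ rc ∈ R, f rc = (q : ℤ) * b * (a + p) := by
    rw [hR, Finset.sum_product]
    simp_rw [hinner]
    rw [Finset.sum_sub_distrib, Finset.sum_const, Nat.card_Ioc]
    simp only [Nat.sub_zero, nsmul_eq_mul]
    have : ∀ r : ℕ, (b : ℤ) * (2 * r + K) = 2 * b * (r : ℤ) + b * K := by
      intro r; ring
    simp_rw [this]
    rw [Finset.sum_add_distrib, Finset.sum_const, Nat.card_Ioc, ← Finset.mul_sum]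
    simp only [Nat.sub_zero, nsmul_eq_mul]
    have g := gauss q
    rw [hK]
    push_cast at g ⊢
    linear_combination (-(b : ℤ)) * g
  have : ∑ rc ∈ R.filter (fun rc => ¬ rc.2 ≤ lam rc.1), (- f rc)
      = - (∑ rc ∈ R, f rc - ∑ rc ∈ R.filter (fun rc => rc.2 ≤ lam rc.1), f rc) := by
    rw [Finset.sum_neg_distrib]
    rw [← hsplit]
    ring
  rw [this, hRsum]
  ring

end TwoBoundary
end
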